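/- arXiv:2407.16450 — 3 statements merged into one kernel-verified Lean document; each statement's English description precedes it below -/
import Mathlib

section
/- If a continuous function F : [0,T) → ℝ satisfies F(t) ≥ c·exp(∫₀ᵗ F(s) ds) for all t ∈ [0,T) with some constant c > 0, then T ≤ 1/c. (Hence any such F cannot exist globally in time: a quantity bounded below by the exponential of its own time integral blows up in finite time.) -/
/-!
Write `G(t) = ∫₀ᵗ F`. Then `G' = F ≥ c e^G`, so `(e^{-G})' = -F e^{-G} ≤ -c` and
`0 < e^{-G(t)} ≤ 1 - c t` for every `t < T`.
Were `T > 1/c`, the choice `t = 1/c` would give `0 < 0`.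
-/

open Real Set MeasureTheory intervalIntegral

theorem Convex.exp_neg_add_mul_le_of_mul_exp_le_deriv {D : Set ℝ} (hD : Convex ℝ D)
    {G g : ℝ → ℝ} {c : ℝ} (hG : ContinuousOn G D)
    (hG' : ∀ x ∈ interior D, HasDerivAt G (g x) x)
    (hg : ∀ x ∈ interior D, c * exp (G x) ≤ g x) {x y : ℝ} (hx : x ∈ D) (hy : y ∈ D)
    (hxy : x ≤ y) : exp (-G y) + c * (y - x) ≤ exp (-G x) := by
  have hderiv : ∀ z ∈ interior D, HasDerivAt (fun u => exp (-G u)) (-g z * exp (-G z)) z :=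
    fun z hz => by simpa [mul_comm] using (hG' z hz).neg.exp
  have hslope : ∀ z ∈ interior D, deriv (fun u => exp (-G u)) z ≤ -c := by
    intro z hz
    rw [(hderiv z hz).deriv]
    have : c * exp (G z) * exp (-G z) ≤ g z * exp (-G z) :=
      mul_le_mul_of_nonneg_right (hg z hz) (exp_pos _).le
    rw [mul_assoc, ← exp_add, add_neg_cancel, exp_zero, mul_one] at this
    linarith
  have := hD.image_sub_le_mul_sub_of_deriv_le (f := fun u => exp (-G u)) hG.neg.rexp
    (fun z hz => (hderiv z hz).differentiableAt.differentiableWithinAt) hslope x hx y hy hxy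
  linarith

theorem ContinuousOn.continuousOn_integral_Icc {F : ℝ → ℝ} {a b : ℝ} (hab : a ≤ b)
    (hF : ContinuousOn F (Icc a b)) : ContinuousOn (fun u => ∫ s in a..u, F s) (Icc a b) := by
  have h := continuousOn_primitive_interval (a := a) (b := b)
    (by simpa only [uIcc_of_le hab] using hF.integrableOn_compact (μ := volume) isCompact_Icc)
  rwa [uIcc_of_le hab] at h

theorem ContinuousOn.hasDerivAt_integral_of_mem_Ioo {F : ℝ → ℝ} {a b x : ℝ}
    (hF : ContinuousOn F (Icc a b)) (hx : x ∈ Ioo a b) :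
    HasDerivAt (fun u => ∫ s in a..u, F s) (F x) x :=
  integral_hasDerivAt_right
    ((hF.mono (Icc_subset_Icc_right hx.2.le)).intervalIntegrable_of_Icc hx.1.le)
    ((hF.mono Ioo_subset_Icc_self).stronglyMeasurableAtFilter isOpen_Ioo x hx)
    (hF.continuousAt (Icc_mem_nhds hx.1 hx.2))

theorem mul_sub_lt_one_of_mul_exp_integral_le {F : ℝ → ℝ} {a b c : ℝ} (hab : a ≤ b)
    (hF : ContinuousOn F (Icc a b))
    (hge : ∀ x ∈ Ioo a b, c * exp (∫ s in a..x, F s) ≤ F x) : c * (b - a) < 1 := by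
  have key := (convex_Icc a b).exp_neg_add_mul_le_of_mul_exp_le_deriv
    (hF.continuousOn_integral_Icc hab)
    (fun x hx => hF.hasDerivAt_integral_of_mem_Ioo (by rwa [interior_Icc] at hx))
    (fun x hx => hge x (by rwa [interior_Icc] at hx))
    (left_mem_Icc.2 hab) (right_mem_Icc.2 hab) hab
  simp only [integral_same, neg_zero, exp_zero] at key
  linarith [exp_pos (-∫ s in a..b, F s)]

theorem exp_integral_lower_bound_blowup (T c : ℝ) (F : ℝ → ℝ) (hc : 0 < c)
    (hF : ContinuousOn F (Set.Ico 0 T))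
    (hge : ∀ t ∈ Set.Ico (0:ℝ) T, F t ≥ c * Real.exp (∫ s in Set.Icc 0 t, F s)) :
    T ≤ 1 / c := by
  by_contra! hT
  have hc_inv : 0 ≤ 1 / c := by positivity
  have hsub : Icc 0 (1 / c) ⊆ Ico 0 T := Icc_subset_Ico_right hT
  have hge' : ∀ x ∈ Ioo 0 (1 / c), c * exp (∫ s in 0..x, F s) ≤ F x := fun x hx => by
    rw [integral_of_le hx.1.le, ← integral_Icc_eq_integral_Ioc]
    exact hge x (hsub (Ioo_subset_Icc_self hx))
  have := mul_sub_lt_one_of_mul_exp_integral_le hc_inv (hF.mono hsub) hge'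
  rw [sub_zero, mul_one_div_cancel hc.ne'] at this
  exact lt_irrefl 1 this
end

section
/- If ω : ℝ² → ℝ is nonnegative, supported in the cone C = {(r,θ) : 3π/8 < |θ| < 5π/8}, and its 2k-th angular Fourier coefficient ω_{2k}(r) = (1/π)∫_{-π}^{π} ω(r,θ) cos(2kθ) dθ, then |ω_{2k}(r)| ≤ √2 · |ω_2(r)| for all r ≥ 0 and all k ≥ 1. -/
/-!
On the cone `3π/8 < |θ| < 5π/8` the angle `2θ` lies within `π/4` of `±π`, so
`cos 2θ ≤ -√2/2` there. For a nonnegative weight carried by the cone this gives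
`|ω₂| ≥ (√2/2) ∫ ω`, while trivially `|ω_{2k}| ≤ ∫ ω` since `|cos| ≤ 1`.
-/

open MeasureTheory Real

theorem cos_two_mul_le_neg_sqrt_two_div_two {θ : ℝ} (hlo : 3 * π / 8 ≤ |θ|)
    (hhi : |θ| ≤ 5 * π / 8) : cos (2 * θ) ≤ -(√2 / 2) := by
  have hdist : |2 * |θ| - π| ≤ π / 4 := abs_le.mpr ⟨by linarith, by linarith⟩
  have hcos : cos (π / 4) ≤ cos (2 * |θ| - π) := by
    rw [← cos_abs (2 * |θ| - π)]
    exact cos_le_cos_of_nonneg_of_le_pi (abs_nonneg _) (by linarith [pi_pos]) hdist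
  have hreflect : cos (2 * θ) = -cos (2 * |θ| - π) := by
    rw [cos_sub_pi, neg_neg, ← cos_abs (2 * θ), abs_mul, abs_two]
  rw [cos_pi_div_four] at hcos
  linarith

section WeightedIntegrals

variable {α : Type*} [MeasurableSpace α] {μ : Measure α} {f g : α → ℝ}

theorem abs_integral_mul_le_integral_of_abs_le_one (hf : 0 ≤ f) (hfi : Integrable f μ)
    (hg : AEStronglyMeasurable g μ) (hg1 : ∀ x, |g x| ≤ 1) :
    |∫ x, f x * g x ∂μ| ≤ ∫ x, f x ∂μ := by
  have hfg : Integrable (fun x => f x * g x) μ :=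
    hfi.mul_bdd hg (Filter.Eventually.of_forall hg1)
  calc |∫ x, f x * g x ∂μ| ≤ ∫ x, |f x * g x| ∂μ := abs_integral_le_integral_abs
    _ ≤ ∫ x, f x ∂μ := integral_mono hfg.abs hfi fun x => by
        rw [abs_mul, abs_of_nonneg (hf x)]
        exact mul_le_of_le_one_right (hf x) (hg1 x)

theorem integral_mul_le_of_le_on_support {c : ℝ} (hf : 0 ≤ f) (hfi : Integrable f μ)
    (hg : AEStronglyMeasurable g μ) (hg1 : ∀ x, |g x| ≤ 1)
    (hgc : ∀ x, f x ≠ 0 → g x ≤ c) :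
    ∫ x, f x * g x ∂μ ≤ c * ∫ x, f x ∂μ := by
  rw [← integral_const_mul]
  refine integral_mono (hfi.mul_bdd hg (Filter.Eventually.of_forall hg1))
    (hfi.const_mul c) fun x => ?_
  by_cases hx : f x = 0
  · simp [hx]
  · rw [mul_comm c]
    exact mul_le_mul_of_nonneg_left (hgc x hx) (hf x)

end WeightedIntegrals

theorem abs_le_sqrt_two_mul_abs_of_le_of_le_neg {a b I : ℝ} (ha : |a| ≤ I)
    (hb : b ≤ -(√2 / 2) * I) : |a| ≤ √2 * |b| := by
  have hs : √2 * √2 = 2 := mul_self_sqrt zero_le_two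
  have hb' : √2 / 2 * I ≤ |b| := by linarith [neg_abs_le b]
  nlinarith [sqrt_nonneg 2, abs_nonneg a]

theorem fourier_mode_domination (ω : ℝ → ℝ → ℝ)
    (hnonneg : ∀ r θ, 0 ≤ ω r θ)
    (hint : ∀ r, MeasureTheory.IntegrableOn (ω r) (Set.Icc (-Real.pi) Real.pi))
    (hsupp : ∀ r θ, ¬ (3 * Real.pi / 8 < |θ| ∧ |θ| < 5 * Real.pi / 8) → ω r θ = 0) :
    ∀ r ≥ (0:ℝ), ∀ k : ℕ, 1 ≤ k →
      |(1 / Real.pi) * ∫ θ in Set.Icc (-Real.pi) Real.pi, ω r θ * Real.cos (2 * k * θ)|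
        ≤ Real.sqrt 2 *
          |(1 / Real.pi) * ∫ θ in Set.Icc (-Real.pi) Real.pi, ω r θ * Real.cos (2 * θ)| := by
  intro r _ k _
  have hcos_meas (c : ℝ) : AEStronglyMeasurable (fun θ : ℝ => cos (c * θ))
      (volume.restrict (Set.Icc (-π) π)) :=
    (continuous_cos.comp (continuous_const_mul c)).aestronglyMeasurable
  have hmode_k := abs_integral_mul_le_integral_of_abs_le_one (hnonneg r) (hint r)
    (hcos_meas (2 * k)) fun θ => abs_cos_le_one _
  have hmode_two := integral_mul_le_of_le_on_support (hnonneg r) (hint r)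
    (hcos_meas 2) (fun θ => abs_cos_le_one _) fun θ hθ => by
      obtain ⟨hlo, hhi⟩ := not_not.mp (mt (hsupp r θ) hθ)
      exact cos_two_mul_le_neg_sqrt_two_div_two hlo.le hhi.le
  rw [abs_mul, abs_mul, mul_left_comm]
  exact mul_le_mul_of_nonneg_left
    (abs_le_sqrt_two_mul_abs_of_le_of_le_neg hmode_k hmode_two) (abs_nonneg _)
end

section
/- Energy dissipation identity for positive solutions: if ω = exp(f) with f : [0,T) × 𝕋² → ℝ smooth solving ∂ₜ f = R₁²(exp f), then (1/2) d/dt ‖∇f‖²_{L²} = −∫_{𝕋²} exp(f) (∂ₓ f)² ≤ 0; in particular t ↦ ‖∇f(t)‖_{L²} is non-increasing. -/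
open Real intervalIntegral

/-- partial derivative in the first variable -/
noncomputable def pd1 (h : ℝ → ℝ → ℝ) (x y : ℝ) : ℝ := deriv (fun x' => h x' y) x

/-- partial derivative in the second variable -/
noncomputable def pd2 (h : ℝ → ℝ → ℝ) (x y : ℝ) : ℝ := deriv (fun y' => h x y') y

/-- integral over the fundamental domain of the torus `𝕋²` -/
noncomputable def torusInt (h : ℝ → ℝ → ℝ) : ℝ :=
  ∫ x in (0:ℝ)..(2 * π), ∫ y in (0:ℝ)..(2 * π), h x y

/-- `h` is `2π`-periodic in both variables -/
def TorusFun (h : ℝ → ℝ → ℝ) : Prop :=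
  ∀ x y, h (x + 2 * π) y = h x y ∧ h x (y + 2 * π) = h x y

open MeasureTheory

namespace ED

noncomputable def μI : Measure ℝ := volume.restrict (Set.Ioc 0 (2 * π))
noncomputable def μ2 : Measure (ℝ × ℝ) := μI.prod μI

lemma two_pi_pos : (0:ℝ) < 2 * π := by positivity

instance : IsFiniteMeasure μI :=
  ⟨by rw [μI, Measure.restrict_apply_univ]; exact measure_Ioc_lt_top⟩

instance : SFinite μI := by rw [μI]; infer_instance

lemma μ2_eq : μ2 = (volume : Measure (ℝ × ℝ)).restrict
    (Set.Ioc 0 (2 * π) ×ˢ Set.Ioc 0 (2 * π)) := by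
  rw [μ2, μI, Measure.prod_restrict, ← Measure.volume_eq_prod]

instance : IsFiniteMeasure μ2 := by rw [μ2]; infer_instance

lemma integrable_mu2 {φ : ℝ × ℝ → ℝ} (hφ : Continuous φ) : Integrable φ μ2 := by
  obtain ⟨C, hC⟩ := (IsCompact.prod isCompact_Icc isCompact_Icc :
      IsCompact (Set.Icc (0:ℝ) (2*π) ×ˢ Set.Icc (0:ℝ) (2*π))).exists_bound_of_continuousOn
      hφ.continuousOn
  refine Integrable.mono' (integrable_const C) hφ.aestronglyMeasurable ?_
  rw [μ2_eq]
  filter_upwards [ae_restrict_mem ((measurableSet_Ioc).prod measurableSet_Ioc)] with z hz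
  exact hC z ⟨Set.Ioc_subset_Icc_self hz.1, Set.Ioc_subset_Icc_self hz.2⟩

lemma torusInt_eq {h : ℝ → ℝ → ℝ} (hc : Continuous (fun p : ℝ × ℝ => h p.1 p.2)) :
    torusInt h = ∫ z, h z.1 z.2 ∂μ2 := by
  rw [torusInt, intervalIntegral.integral_of_le two_pi_pos.le]
  have : ∀ x, ∫ y in (0:ℝ)..(2*π), h x y = ∫ y, h x y ∂μI := fun x => by
    rw [intervalIntegral.integral_of_le two_pi_pos.le]; rfl
  simp_rw [this]
  exact MeasureTheory.integral_integral (integrable_mu2 hc)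

lemma torusInt_swap {h : ℝ → ℝ → ℝ} (hc : Continuous (fun p : ℝ × ℝ => h p.1 p.2)) :
    torusInt h = ∫ y in (0:ℝ)..(2 * π), ∫ x in (0:ℝ)..(2 * π), h x y := by
  rw [torusInt, intervalIntegral.integral_of_le two_pi_pos.le,
    intervalIntegral.integral_of_le two_pi_pos.le]
  have e1 : ∀ x, ∫ y in (0:ℝ)..(2*π), h x y = ∫ y, h x y ∂μI := fun x => by
    rw [intervalIntegral.integral_of_le two_pi_pos.le]; rfl
  have e2 : ∀ y, ∫ x in (0:ℝ)..(2*π), h x y = ∫ x, h x y ∂μI := fun y => by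
    rw [intervalIntegral.integral_of_le two_pi_pos.le]; rfl
  simp_rw [e1, e2]
  exact MeasureTheory.integral_integral_swap (integrable_mu2 hc)

lemma torusInt_congr {h k : ℝ → ℝ → ℝ} (e : ∀ x y, h x y = k x y) :
    torusInt h = torusInt k := by
  have : h = k := funext fun x => funext fun y => e x y
  rw [this]

lemma torusInt_const_mul (c : ℝ) (h : ℝ → ℝ → ℝ) :
    torusInt (fun x y => c * h x y) = c * torusInt h := by
  simp [torusInt, intervalIntegral.integral_const_mul]

lemma torusInt_add {h k : ℝ → ℝ → ℝ} (hh : Continuous (fun p : ℝ × ℝ => h p.1 p.2))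
    (hk : Continuous (fun p : ℝ × ℝ => k p.1 p.2)) :
    torusInt (fun x y => h x y + k x y) = torusInt h + torusInt k := by
  rw [torusInt_eq (hh.add hk), torusInt_eq hh, torusInt_eq hk]
  exact integral_add (integrable_mu2 hh) (integrable_mu2 hk)

lemma torusInt_nonneg {h : ℝ → ℝ → ℝ} (hnn : ∀ x y, 0 ≤ h x y) : 0 ≤ torusInt h := by
  apply intervalIntegral.integral_nonneg two_pi_pos.le
  intro x _
  exact intervalIntegral.integral_nonneg two_pi_pos.le (fun y _ => hnn x y)

end ED
namespace ED

/-- slice derivative lemmas in `ℝ × ℝ × ℝ` -/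
lemma sliceT {G : ℝ × ℝ × ℝ → ℝ} (hG : Differentiable ℝ G) (t x y : ℝ) :
    HasDerivAt (fun s => G (s, x, y)) (fderiv ℝ G (t, x, y) (1, 0, 0)) t := by
  have h1 : HasDerivAt (fun s : ℝ => (s, x, y) : ℝ → ℝ × ℝ × ℝ) (1, 0, 0) t :=
    (hasDerivAt_id t).prodMk (hasDerivAt_const t (x, y))
  exact (hG (t, x, y)).hasFDerivAt.comp_hasDerivAt t h1

lemma sliceX {G : ℝ × ℝ × ℝ → ℝ} (hG : Differentiable ℝ G) (t x y : ℝ) :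
    HasDerivAt (fun x' => G (t, x', y)) (fderiv ℝ G (t, x, y) (0, 1, 0)) x := by
  have h1 : HasDerivAt (fun x' : ℝ => (t, x', y) : ℝ → ℝ × ℝ × ℝ) (0, 1, 0) x :=
    (hasDerivAt_const x t).prodMk ((hasDerivAt_id x).prodMk (hasDerivAt_const x y))
  exact (hG (t, x, y)).hasFDerivAt.comp_hasDerivAt x h1

lemma sliceY {G : ℝ × ℝ × ℝ → ℝ} (hG : Differentiable ℝ G) (t x y : ℝ) :
    HasDerivAt (fun y' => G (t, x, y')) (fderiv ℝ G (t, x, y) (0, 0, 1)) y := by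
  have h1 : HasDerivAt (fun y' : ℝ => (t, x, y') : ℝ → ℝ × ℝ × ℝ) (0, 0, 1) y :=
    (hasDerivAt_const y t).prodMk ((hasDerivAt_const y x).prodMk (hasDerivAt_id y))
  exact (hG (t, x, y)).hasFDerivAt.comp_hasDerivAt y h1

/-- slice derivative lemmas in `ℝ × ℝ` -/
lemma slice2X {G : ℝ × ℝ → ℝ} (hG : Differentiable ℝ G) (x y : ℝ) :
    HasDerivAt (fun x' => G (x', y)) (fderiv ℝ G (x, y) (1, 0)) x := by
  have h1 : HasDerivAt (fun x' : ℝ => (x', y) : ℝ → ℝ × ℝ) (1, 0) x :=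
    (hasDerivAt_id x).prodMk (hasDerivAt_const x y)
  exact (hG (x, y)).hasFDerivAt.comp_hasDerivAt x h1

lemma slice2Y {G : ℝ × ℝ → ℝ} (hG : Differentiable ℝ G) (x y : ℝ) :
    HasDerivAt (fun y' => G (x, y')) (fderiv ℝ G (x, y) (0, 1)) y := by
  have h1 : HasDerivAt (fun y' : ℝ => (x, y') : ℝ → ℝ × ℝ) (0, 1) y :=
    (hasDerivAt_const y x).prodMk (hasDerivAt_id y)
  exact (hG (x, y)).hasFDerivAt.comp_hasDerivAt y h1

lemma contDiff_fderiv_apply {E : Type*} [NormedAddCommGroup E] [NormedSpace ℝ E]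
    {G : E → ℝ} (hG : ContDiff ℝ (⊤ : ℕ∞) G) (v : E) :
    ContDiff ℝ (⊤ : ℕ∞) (fun p => fderiv ℝ G p v) :=
  (hG.fderiv_right (by simp)).clm_apply contDiff_const

/-- Clairaut via symmetry of the second derivative -/
lemma fderiv_swap {E : Type*} [NormedAddCommGroup E] [NormedSpace ℝ E]
    {G : E → ℝ} (hG : ContDiff ℝ (⊤ : ℕ∞) G) (p v w : E) :
    fderiv ℝ (fun q => fderiv ℝ G q v) p w = fderiv ℝ (fun q => fderiv ℝ G q w) p v := by
  have hd : Differentiable ℝ (fderiv ℝ G) := (hG.fderiv_right (m := (⊤ : ℕ∞)) (by simp)).differentiable (by simp)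
  have key : ∀ u : E, fderiv ℝ (fun q => fderiv ℝ G q u) p
      = (fderiv ℝ (fderiv ℝ G) p).flip u := by
    intro u
    have := fderiv_clm_apply (hd p) (differentiableAt_const u)
    simpa using this
  rw [key v, key w]
  simp only [ContinuousLinearMap.flip_apply]
  exact (hG.contDiffAt.isSymmSndFDerivAt (by norm_num; exact WithTop.coe_le_coe.mpr (le_top : (2:ℕ∞) ≤ ⊤))) w v

end ED

namespace ED2
open ED

lemma hasDerivAt_torusInt {g : ℝ → ℝ → ℝ → ℝ}
    (hg : ContDiff ℝ (⊤ : ℕ∞) (fun p : ℝ × ℝ × ℝ => g p.1 p.2.1 p.2.2)) (t : ℝ) :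
    HasDerivAt (fun s => torusInt (g s))
      (torusInt (fun x y => deriv (fun s => g s x y) t)) t := by
  set G := fun p : ℝ × ℝ × ℝ => g p.1 p.2.1 p.2.2 with hGdef
  have hGc : Continuous G := hg.continuous
  have hGd : Differentiable ℝ G := hg.differentiable (by simp)
  have hF'c : Continuous (fun p : ℝ × ℝ × ℝ => fderiv ℝ G p (1, 0, 0)) :=
    (contDiff_fderiv_apply hg _).continuous
  have hcs : ∀ s, Continuous (fun z : ℝ × ℝ => G (s, z.1, z.2)) := fun s =>
    hGc.comp (continuous_const.prodMk (continuous_fst.prodMk continuous_snd))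
  have hrw : (fun s => torusInt (g s)) = fun s => ∫ z, G (s, z.1, z.2) ∂μ2 :=
    funext fun s => torusInt_eq (hcs s)
  have hF'cs : Continuous (fun z : ℝ × ℝ => fderiv ℝ G (t, z.1, z.2) (1, 0, 0)) :=
    hF'c.comp (continuous_const.prodMk (continuous_fst.prodMk continuous_snd))
  have htgt : torusInt (fun x y => deriv (fun s => g s x y) t)
      = ∫ z, fderiv ℝ G (t, z.1, z.2) (1, 0, 0) ∂μ2 := by
    rw [torusInt_congr (fun x y => ((sliceT hGd t x y).deriv :
      deriv (fun s => g s x y) t = _))]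
    exact torusInt_eq hF'cs
  rw [hrw, htgt]
  -- bound from compactness
  obtain ⟨C, hC⟩ := (IsCompact.prod (isCompact_Icc (a := t - 1) (b := t + 1))
      ((isCompact_Icc (a := (0:ℝ)) (b := 2*π)).prod isCompact_Icc)).exists_bound_of_continuousOn
      hF'c.continuousOn
  have main := hasDerivAt_integral_of_dominated_loc_of_deriv_le (μ := μ2)
    (F := fun s z => G (s, z.1, z.2))
    (F' := fun s (z : ℝ × ℝ) => fderiv ℝ G (s, z.1, z.2) (1, 0, 0))
    (bound := fun _ => C) (x₀ := t) (Metric.ball_mem_nhds t one_pos)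
    (Filter.Eventually.of_forall fun s => (hcs s).aestronglyMeasurable)
    (integrable_mu2 (hcs t)) (hF'cs.aestronglyMeasurable)
    ?_ (integrable_const C)
    (Filter.Eventually.of_forall fun z s _ => sliceT hGd s z.1 z.2)
  · exact main.2
  · rw [μ2_eq]
    filter_upwards [ae_restrict_mem (measurableSet_Ioc.prod measurableSet_Ioc)] with z hz
    intro s hs
    apply hC
    have hs' : s ∈ Set.Icc (t - 1) (t + 1) := by
      rw [Metric.mem_ball, Real.dist_eq] at hs
      constructor <;> [linarith [abs_lt.1 hs |>.1]; linarith [abs_lt.1 hs |>.2]]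
    exact ⟨hs', ⟨Set.Ioc_subset_Icc_self hz.1, Set.Ioc_subset_Icc_self hz.2⟩⟩

end ED2

namespace ED3
open ED ED2

lemma pd1_hasDerivAt {h : ℝ → ℝ → ℝ} (hh : ContDiff ℝ (⊤ : ℕ∞) (fun p : ℝ × ℝ => h p.1 p.2))
    (x y : ℝ) : HasDerivAt (fun x' => h x' y) (pd1 h x y) x := by
  have h1 := slice2X (hh.differentiable (by simp)) x y
  have h2 : pd1 h x y = fderiv ℝ (fun p : ℝ × ℝ => h p.1 p.2) (x, y) (1, 0) := h1.deriv
  rw [h2]; exact h1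

lemma pd2_hasDerivAt {h : ℝ → ℝ → ℝ} (hh : ContDiff ℝ (⊤ : ℕ∞) (fun p : ℝ × ℝ => h p.1 p.2))
    (x y : ℝ) : HasDerivAt (fun y' => h x y') (pd2 h x y) y := by
  have h1 := slice2Y (hh.differentiable (by simp)) x y
  have h2 : pd2 h x y = fderiv ℝ (fun p : ℝ × ℝ => h p.1 p.2) (x, y) (0, 1) := h1.deriv
  rw [h2]; exact h1

lemma pd1_contDiff {h : ℝ → ℝ → ℝ} (hh : ContDiff ℝ (⊤ : ℕ∞) (fun p : ℝ × ℝ => h p.1 p.2)) :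
    ContDiff ℝ (⊤ : ℕ∞) (fun p : ℝ × ℝ => pd1 h p.1 p.2) := by
  have : (fun p : ℝ × ℝ => pd1 h p.1 p.2)
      = fun p : ℝ × ℝ => fderiv ℝ (fun q : ℝ × ℝ => h q.1 q.2) p (1, 0) :=
    funext fun p => ((slice2X (hh.differentiable (by simp)) p.1 p.2).deriv)
  rw [this]; exact contDiff_fderiv_apply hh _

lemma pd2_contDiff {h : ℝ → ℝ → ℝ} (hh : ContDiff ℝ (⊤ : ℕ∞) (fun p : ℝ × ℝ => h p.1 p.2)) :
    ContDiff ℝ (⊤ : ℕ∞) (fun p : ℝ × ℝ => pd2 h p.1 p.2) := by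
  have : (fun p : ℝ × ℝ => pd2 h p.1 p.2)
      = fun p : ℝ × ℝ => fderiv ℝ (fun q : ℝ × ℝ => h q.1 q.2) p (0, 1) :=
    funext fun p => ((slice2Y (hh.differentiable (by simp)) p.1 p.2).deriv)
  rw [this]; exact contDiff_fderiv_apply hh _

/-- integration by parts in the `x` variable, for `2π`-periodic functions -/
lemma ibp_x {h k : ℝ → ℝ → ℝ} (hh : ContDiff ℝ (⊤ : ℕ∞) (fun p : ℝ × ℝ => h p.1 p.2))
    (hk : ContDiff ℝ (⊤ : ℕ∞) (fun p : ℝ × ℝ => k p.1 p.2))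
    (hperh : ∀ x y, h (x + 2 * π) y = h x y) (hperk : ∀ x y, k (x + 2 * π) y = k x y) :
    torusInt (fun x y => pd1 h x y * k x y) = -torusInt (fun x y => h x y * pd1 k x y) := by
  have ch := hh.continuous
  have ck := hk.continuous
  have cdh := (pd1_contDiff hh).continuous
  have cdk := (pd1_contDiff hk).continuous
  rw [torusInt_swap (cdh.mul ck), torusInt_swap (ch.mul cdk), ← intervalIntegral.integral_neg]
  apply intervalIntegral.integral_congr
  intro y _
  show (∫ x in (0:ℝ)..(2*π), pd1 h x y * k x y) = -∫ x in (0:ℝ)..(2*π), h x y * pd1 k x y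
  have hu : ∀ x ∈ Set.uIcc (0:ℝ) (2*π), HasDerivAt (fun x' => h x' y) (pd1 h x y) x :=
    fun x _ => pd1_hasDerivAt hh x y
  have hv : ∀ x ∈ Set.uIcc (0:ℝ) (2*π), HasDerivAt (fun x' => k x' y) (pd1 k x y) x :=
    fun x _ => pd1_hasDerivAt hk x y
  have iu : IntervalIntegrable (fun x => pd1 h x y) volume 0 (2*π) :=
    (cdh.comp (continuous_id.prodMk continuous_const)).intervalIntegrable _ _
  have iv : IntervalIntegrable (fun x => pd1 k x y) volume 0 (2*π) :=
    (cdk.comp (continuous_id.prodMk continuous_const)).intervalIntegrable _ _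
  have key := intervalIntegral.integral_deriv_mul_eq_sub hu hv iu iv
  have hb : h (2*π) y * k (2*π) y - h 0 y * k 0 y = 0 := by
    have e1 : h (2*π) y = h 0 y := by rw [← zero_add (2*π)]; exact hperh 0 y
    have e2 : k (2*π) y = k 0 y := by rw [← zero_add (2*π)]; exact hperk 0 y
    rw [e1, e2]; ring
  rw [hb] at key
  have i1 : IntervalIntegrable (fun x => pd1 h x y * k x y) volume 0 (2*π) :=
    iu.mul_continuousOn (ck.comp (continuous_id.prodMk continuous_const)).continuousOn
  have i2 : IntervalIntegrable (fun x => h x y * pd1 k x y) volume 0 (2*π) :=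
    ((ch.comp (continuous_id.prodMk continuous_const)).intervalIntegrable _ _).mul_continuousOn
      (cdk.comp (continuous_id.prodMk continuous_const)).continuousOn
  rw [intervalIntegral.integral_add i1 i2] at key
  linarith

/-- integration by parts in the `y` variable, for `2π`-periodic functions -/
lemma ibp_y {h k : ℝ → ℝ → ℝ} (hh : ContDiff ℝ (⊤ : ℕ∞) (fun p : ℝ × ℝ => h p.1 p.2))
    (hk : ContDiff ℝ (⊤ : ℕ∞) (fun p : ℝ × ℝ => k p.1 p.2))
    (hperh : ∀ x y, h x (y + 2 * π) = h x y) (hperk : ∀ x y, k x (y + 2 * π) = k x y) :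
    torusInt (fun x y => pd2 h x y * k x y) = -torusInt (fun x y => h x y * pd2 k x y) := by
  have ch := hh.continuous
  have ck := hk.continuous
  have cdh := (pd2_contDiff hh).continuous
  have cdk := (pd2_contDiff hk).continuous
  rw [torusInt, torusInt, ← intervalIntegral.integral_neg]
  apply intervalIntegral.integral_congr
  intro x _
  show (∫ y in (0:ℝ)..(2*π), pd2 h x y * k x y) = -∫ y in (0:ℝ)..(2*π), h x y * pd2 k x y
  have hu : ∀ y ∈ Set.uIcc (0:ℝ) (2*π), HasDerivAt (fun y' => h x y') (pd2 h x y) y :=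
    fun y _ => pd2_hasDerivAt hh x y
  have hv : ∀ y ∈ Set.uIcc (0:ℝ) (2*π), HasDerivAt (fun y' => k x y') (pd2 k x y) y :=
    fun y _ => pd2_hasDerivAt hk x y
  have iu : IntervalIntegrable (fun y => pd2 h x y) volume 0 (2*π) :=
    (cdh.comp (continuous_const.prodMk continuous_id)).intervalIntegrable _ _
  have iv : IntervalIntegrable (fun y => pd2 k x y) volume 0 (2*π) :=
    (cdk.comp (continuous_const.prodMk continuous_id)).intervalIntegrable _ _
  have key := intervalIntegral.integral_deriv_mul_eq_sub hu hv iu iv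
  have hb : h x (2*π) * k x (2*π) - h x 0 * k x 0 = 0 := by
    have e1 : h x (2*π) = h x 0 := by rw [← zero_add (2*π)]; exact hperh x 0
    have e2 : k x (2*π) = k x 0 := by rw [← zero_add (2*π)]; exact hperk x 0
    rw [e1, e2]; ring
  rw [hb] at key
  have i1 : IntervalIntegrable (fun y => pd2 h x y * k x y) volume 0 (2*π) :=
    iu.mul_continuousOn (ck.comp (continuous_const.prodMk continuous_id)).continuousOn
  have i2 : IntervalIntegrable (fun y => h x y * pd2 k x y) volume 0 (2*π) :=
    ((ch.comp (continuous_const.prodMk continuous_id)).intervalIntegrable _ _).mul_continuousOn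
      (cdk.comp (continuous_const.prodMk continuous_id)).continuousOn
  rw [intervalIntegral.integral_add i1 i2] at key
  linarith

lemma pd1_per1 {h : ℝ → ℝ → ℝ} (hper : ∀ x y, h (x + 2 * π) y = h x y) :
    ∀ x y, pd1 h (x + 2 * π) y = pd1 h x y := by
  intro x y
  show deriv (fun x' => h x' y) (x + 2 * π) = deriv (fun x' => h x' y) x
  rw [← deriv_comp_add_const (fun x' => h x' y) (2 * π)]
  congr 1
  funext x'
  exact hper x' y

lemma pd2_per2 {h : ℝ → ℝ → ℝ} (hper : ∀ x y, h x (y + 2 * π) = h x y) :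
    ∀ x y, pd2 h x (y + 2 * π) = pd2 h x y := by
  intro x y
  show deriv (fun y' => h x y') (y + 2 * π) = deriv (fun y' => h x y') y
  rw [← deriv_comp_add_const (fun y' => h x y') (2 * π)]
  congr 1
  funext y'
  exact hper x y'

end ED3

open ED ED2 ED3 MeasureTheory in
theorem energy_dissipation (T : ℝ) (hT : 0 < T) (f R : ℝ → ℝ → ℝ → ℝ)
    (hf : ContDiff ℝ (⊤ : ℕ∞) (fun p : ℝ × ℝ × ℝ => f p.1 p.2.1 p.2.2))
    (hfper : ∀ t, TorusFun (f t))
    (hR : ∀ t, Continuous (fun p : ℝ × ℝ => R t p.1 p.2))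
    (hRper : ∀ t, TorusFun (R t))
    -- `R t = R₁²(exp (f t))`, characterized weakly via
    -- `∫ R₁²(g) Δh = −∫ ∂ₓₓ g · h` for all smooth periodic test functions `h`
    (hRchar : ∀ t ∈ Set.Ico (0:ℝ) T, ∀ h : ℝ → ℝ → ℝ,
      ContDiff ℝ (⊤ : ℕ∞) (fun p : ℝ × ℝ => h p.1 p.2) → TorusFun h →
        torusInt (fun x y => R t x y * (pd1 (pd1 h) x y + pd2 (pd2 h) x y))
          = - torusInt (fun x y =>
              pd1 (pd1 (fun x' y' => Real.exp (f t x' y'))) x y * h x y))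
    -- the evolution equation `∂ₜ f = R₁²(exp f)`
    (hode : ∀ t ∈ Set.Ico (0:ℝ) T, ∀ x y, deriv (fun s => f s x y) t = R t x y) :
    ∀ t ∈ Set.Ico (0:ℝ) T,
      HasDerivWithinAt
        (fun s => (1 / 2) * torusInt (fun x y => (pd1 (f s) x y) ^ 2 + (pd2 (f s) x y) ^ 2))
        (- torusInt (fun x y => Real.exp (f t x y) * (pd1 (f t) x y) ^ 2))
        (Set.Ico 0 T) t ∧
      AntitoneOn
        (fun s => Real.sqrt (torusInt (fun x y => (pd1 (f s) x y) ^ 2 + (pd2 (f s) x y) ^ 2)))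
        (Set.Ico 0 T) := by
  have hFd : Differentiable ℝ (fun p : ℝ × ℝ × ℝ => f p.1 p.2.1 p.2.2) :=
    hf.differentiable (by simp)
  set F := fun p : ℝ × ℝ × ℝ => f p.1 p.2.1 p.2.2 with hFdef
  set Gt := fun q : ℝ × ℝ × ℝ => fderiv ℝ F q (1, 0, 0) with hGtdef
  set Gx := fun q : ℝ × ℝ × ℝ => fderiv ℝ F q (0, 1, 0) with hGxdef
  set Gy := fun q : ℝ × ℝ × ℝ => fderiv ℝ F q (0, 0, 1) with hGydef
  have hGt : ContDiff ℝ (⊤ : ℕ∞) Gt := contDiff_fderiv_apply hf _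
  have hGx : ContDiff ℝ (⊤ : ℕ∞) Gx := contDiff_fderiv_apply hf _
  have hGy : ContDiff ℝ (⊤ : ℕ∞) Gy := contDiff_fderiv_apply hf _
  -- smoothness of slices in (x, y)
  have hslice : ∀ t, ContDiff ℝ (⊤ : ℕ∞) (fun p : ℝ × ℝ => f t p.1 p.2) := fun t =>
    hf.comp (contDiff_const.prodMk (contDiff_fst.prodMk contDiff_snd))
  -- the energy integrand is smooth in all three variables
  have hg0 : ContDiff ℝ (⊤ : ℕ∞) (fun p : ℝ × ℝ × ℝ =>
      (pd1 (f p.1) p.2.1 p.2.2) ^ 2 + (pd2 (f p.1) p.2.1 p.2.2) ^ 2) := by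
    have e : (fun p : ℝ × ℝ × ℝ =>
        (pd1 (f p.1) p.2.1 p.2.2) ^ 2 + (pd2 (f p.1) p.2.1 p.2.2) ^ 2)
        = fun p => (Gx p) ^ 2 + (Gy p) ^ 2 := by
      funext p
      have e1 : pd1 (f p.1) p.2.1 p.2.2 = Gx p := (sliceX hFd p.1 p.2.1 p.2.2).deriv
      have e2 : pd2 (f p.1) p.2.1 p.2.2 = Gy p := (sliceY hFd p.1 p.2.1 p.2.2).deriv
      rw [e1, e2]
    rw [e]
    exact (hGx.pow 2).add (hGy.pow 2)
  -- derivative of the energy at every time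
  have keyD : ∀ t : ℝ, HasDerivAt
      (fun s => (1 / 2) * torusInt (fun x y => (pd1 (f s) x y) ^ 2 + (pd2 (f s) x y) ^ 2))
      (torusInt (fun x y =>
        pd1 (f t) x y * pd1 (fun a b => deriv (fun s => f s a b) t) x y
        + pd2 (f t) x y * pd2 (fun a b => deriv (fun s => f s a b) t) x y)) t := by
    intro t
    set w : ℝ → ℝ → ℝ := fun a b => deriv (fun s => f s a b) t with hwdef
    have derivg : ∀ x y, deriv (fun s => (pd1 (f s) x y) ^ 2 + (pd2 (f s) x y) ^ 2) t
        = 2 * (pd1 (f t) x y * pd1 w x y + pd2 (f t) x y * pd2 w x y) := by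
      intro x y
      have hA : HasDerivAt (fun s => pd1 (f s) x y) (pd1 w x y) t := by
        have e : (fun s => pd1 (f s) x y) = fun s => Gx (s, x, y) :=
          funext fun s => (sliceX hFd s x y).deriv
        have ew : (fun x' => w x' y) = fun x' => Gt (t, x', y) :=
          funext fun x' => (sliceT hFd t x' y).deriv
        have e2 : pd1 w x y = fderiv ℝ Gx (t, x, y) (1, 0, 0) := by
          show deriv (fun x' => w x' y) x = _
          rw [ew, (sliceX (hGt.differentiable (by simp)) t x y).deriv]
          exact fderiv_swap hf (t, x, y) (1, 0, 0) (0, 1, 0)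
        rw [e, e2]; exact sliceT (hGx.differentiable (by simp)) t x y
      have hB : HasDerivAt (fun s => pd2 (f s) x y) (pd2 w x y) t := by
        have e : (fun s => pd2 (f s) x y) = fun s => Gy (s, x, y) :=
          funext fun s => (sliceY hFd s x y).deriv
        have ew : (fun y' => w x y') = fun y' => Gt (t, x, y') :=
          funext fun y' => (sliceT hFd t x y').deriv
        have e2 : pd2 w x y = fderiv ℝ Gy (t, x, y) (1, 0, 0) := by
          show deriv (fun y' => w x y') y = _
          rw [ew, (sliceY (hGt.differentiable (by simp)) t x y).deriv]
          exact fderiv_swap hf (t, x, y) (1, 0, 0) (0, 0, 1)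
        rw [e, e2]; exact sliceT (hGy.differentiable (by simp)) t x y
      have hAB : HasDerivAt (fun s => (pd1 (f s) x y) ^ 2 + (pd2 (f s) x y) ^ 2) _ t :=
        (hA.pow 2).add (hB.pow 2)
      rw [hAB.deriv]
      push_cast
      ring
    have h1 := (hasDerivAt_torusInt (g := fun s x y =>
      (pd1 (f s) x y) ^ 2 + (pd2 (f s) x y) ^ 2) hg0 t).const_mul (1/2 : ℝ)
    have e3 : (1/2 : ℝ) * torusInt (fun x y =>
        deriv (fun s => (pd1 (f s) x y) ^ 2 + (pd2 (f s) x y) ^ 2) t)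
        = torusInt (fun x y =>
          pd1 (f t) x y * pd1 w x y + pd2 (f t) x y * pd2 w x y) := by
      rw [torusInt_congr derivg, torusInt_const_mul]
      ring
    rw [e3] at h1
    exact h1

  set E := fun s => (1 / 2) * torusInt (fun x y =>
    (pd1 (f s) x y) ^ 2 + (pd2 (f s) x y) ^ 2) with hEdef
  have Ediff : Differentiable ℝ E := fun t => (keyD t).differentiableAt
  have Econt : Continuous E := Ediff.continuous
  have hDval : ∀ t ∈ Set.Ico (0:ℝ) T,
      torusInt (fun x y =>
        pd1 (f t) x y * pd1 (fun a b => deriv (fun s => f s a b) t) x y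
        + pd2 (f t) x y * pd2 (fun a b => deriv (fun s => f s a b) t) x y)
      = - torusInt (fun x y => Real.exp (f t x y) * (pd1 (f t) x y) ^ 2) := by
    intro t ht
    set w : ℝ → ℝ → ℝ := fun a b => deriv (fun s => f s a b) t with hwdef
    have hw : ContDiff ℝ (⊤ : ℕ∞) (fun p : ℝ × ℝ => w p.1 p.2) := by
      have e : (fun p : ℝ × ℝ => w p.1 p.2) = fun p : ℝ × ℝ => Gt (t, p.1, p.2) :=
        funext fun p => (sliceT hFd t p.1 p.2).deriv
      rw [e]
      exact hGt.comp (contDiff_const.prodMk (contDiff_fst.prodMk contDiff_snd))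
    have hwper1 : ∀ x y, w (x + 2 * π) y = w x y := by
      intro x y
      show deriv (fun s => f s (x + 2 * π) y) t = deriv (fun s => f s x y) t
      congr 1
      funext s
      exact (hfper s x y).1
    have hwper2 : ∀ x y, w x (y + 2 * π) = w x y := by
      intro x y
      show deriv (fun s => f s x (y + 2 * π)) t = deriv (fun s => f s x y) t
      congr 1
      funext s
      exact (hfper s x y).2
    have hfp1 : ∀ x y, f t (x + 2 * π) y = f t x y := fun x y => (hfper t x y).1
    have hfp2 : ∀ x y, f t x (y + 2 * π) = f t x y := fun x y => (hfper t x y).2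
    have hEf : ContDiff ℝ (⊤ : ℕ∞) (fun p : ℝ × ℝ =>
        (fun x' y' => Real.exp (f t x' y')) p.1 p.2) :=
      Real.contDiff_exp.comp (hslice t)
    have hEfper1 : ∀ x y, (fun x' y' => Real.exp (f t x' y')) (x + 2 * π) y
        = (fun x' y' => Real.exp (f t x' y')) x y := fun x y => by
      simp only []
      rw [hfp1]
    have cp1f := (pd1_contDiff (hslice t)).continuous
    have cp2f := (pd2_contDiff (hslice t)).continuous
    have cw := hw.continuous
    have cp1w := (pd1_contDiff hw).continuous
    have cp2w := (pd2_contDiff hw).continuous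
    have c2x := (pd1_contDiff (pd1_contDiff (hslice t))).continuous
    have c2y := (pd2_contDiff (pd2_contDiff (hslice t))).continuous
    have step0 : torusInt (fun x y =>
        pd1 (f t) x y * pd1 w x y + pd2 (f t) x y * pd2 w x y)
        = torusInt (fun x y => pd1 w x y * pd1 (f t) x y)
          + torusInt (fun x y => pd2 w x y * pd2 (f t) x y) := by
      rw [← torusInt_add (cp1w.mul cp1f) (cp2w.mul cp2f)]
      exact torusInt_congr fun x y => by ring
    have step1 : torusInt (fun x y => pd1 w x y * pd1 (f t) x y)
        = - torusInt (fun x y => w x y * pd1 (pd1 (f t)) x y) :=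
      ibp_x hw (pd1_contDiff (hslice t)) hwper1 (pd1_per1 hfp1)
    have step2 : torusInt (fun x y => pd2 w x y * pd2 (f t) x y)
        = - torusInt (fun x y => w x y * pd2 (pd2 (f t)) x y) :=
      ibp_y hw (pd2_contDiff (hslice t)) hwper2 (pd2_per2 hfp2)
    have step3 : torusInt (fun x y => w x y * pd1 (pd1 (f t)) x y)
        + torusInt (fun x y => w x y * pd2 (pd2 (f t)) x y)
        = torusInt (fun x y => R t x y * (pd1 (pd1 (f t)) x y + pd2 (pd2 (f t)) x y)) := by
      rw [← torusInt_add (cw.mul c2x) (cw.mul c2y)]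
      exact torusInt_congr fun x y => by
        rw [show w x y = R t x y from hode t ht x y]
        ring
    have step4 := hRchar t ht (f t) (hslice t) (hfper t)
    have step5 : torusInt (fun x y =>
        pd1 (pd1 (fun x' y' => Real.exp (f t x' y'))) x y * f t x y)
        = - torusInt (fun x y =>
            pd1 (fun x' y' => Real.exp (f t x' y')) x y * pd1 (f t) x y) :=
      ibp_x (pd1_contDiff hEf) (hslice t) (pd1_per1 hEfper1) hfp1
    have step6 : torusInt (fun x y =>
        pd1 (fun x' y' => Real.exp (f t x' y')) x y * pd1 (f t) x y)
        = torusInt (fun x y => Real.exp (f t x y) * (pd1 (f t) x y) ^ 2) :=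
      torusInt_congr fun x y => by
        rw [show pd1 (fun x' y' => Real.exp (f t x' y')) x y
          = Real.exp (f t x y) * pd1 (f t) x y from
          ((pd1_hasDerivAt (hslice t) x y).exp).deriv]
        ring
    rw [step0, step1, step2, ← neg_add, step3, step4, neg_neg, step5, step6]
  intro t ht
  constructor
  · have h1 := keyD t
    rw [hDval t ht] at h1
    exact h1.hasDerivWithinAt
  · have hmono : AntitoneOn E (Set.Ico 0 T) := by
      apply antitoneOn_of_deriv_nonpos (convex_Ico 0 T) Econt.continuousOn
      · intro s _
        exact (keyD s).differentiableAt.differentiableWithinAt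
      · intro s hs
        rw [interior_Ico] at hs
        rw [(keyD s).deriv, hDval s (Set.Ioo_subset_Ico_self hs)]
        exact neg_nonpos.mpr (torusInt_nonneg fun x y =>
          mul_nonneg (Real.exp_pos _).le (sq_nonneg _))
    intro a ha b hb hab
    have hE : E b ≤ E a := hmono ha hb hab
    have ea : E a = (1/2) * torusInt (fun x y =>
      (pd1 (f a) x y) ^ 2 + (pd2 (f a) x y) ^ 2) := rfl
    have eb : E b = (1/2) * torusInt (fun x y =>
      (pd1 (f b) x y) ^ 2 + (pd2 (f b) x y) ^ 2) := rfl
    exact Real.sqrt_le_sqrt (by rw [ea, eb] at hE; linarith)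
end
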